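/- Haussler's theorem for a finite hypothesis class (union bound form, as invoked in Theorem 3.3): let H be a nonempty finite set of measurable hypotheses h : X → Bool, let ε be a real number with 0 ≤ ε ≤ 1, and let m : ℕ. Then the probability under μ^{⊗m} of the event {s : Fin m → X | ∃ h ∈ H, (∀ i, h (s i) = c (s i)) ∧ err(h) > ε} (some hypothesis in H is consistent with the sample yet has true error exceeding ε) is at most |H| * (1 − ε)^m ≤ |H| * exp(−ε * m). -/

import Mathlib

open MeasureTheory

/-- True error of hypothesis `h` with respect to target concept `c` under distribution `μ`. -/
noncomputable def trueErr {X : Type*} [MeasurableSpace X]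
    (μ : Measure X) (c h : X → Bool) : ℝ :=
  (μ {x | h x ≠ c x}).toReal

/-!
A fixed hypothesis `h` with `err(h) > ε` agrees with `c` on a fresh sample point with probability
`1 - err(h) < 1 - ε`, so by independence it is consistent with all `m` points with probability at
most `(1 - ε)^m`. A union bound over `H` and `1 - ε ≤ exp(-ε)` finish the proof.
-/

lemma measureReal_pi_forall_mem {ι α : Type*} [Fintype ι] [MeasurableSpace α]
    (μ : Measure α) [SigmaFinite μ] (A : Set α) :
    (Measure.pi fun _ : ι => μ).real {s | ∀ i, s i ∈ A} = μ.real A ^ Fintype.card ι := by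
  have hbox : {s : ι → α | ∀ i, s i ∈ A} = Set.univ.pi fun _ => A := by ext; simp
  simp [measureReal_def, hbox]

section Consistency

variable {X : Type*} [MeasurableSpace X] (μ : Measure X) [IsProbabilityMeasure μ]
  {c h : X → Bool}

lemma measureReal_agree_eq_one_sub_trueErr (hc : Measurable c) (hh : Measurable h) :
    μ.real {x | h x = c x} = 1 - trueErr μ c h := by
  have hdisagree : {x | h x ≠ c x} = {x | h x = c x}ᶜ := rfl
  rw [trueErr, ← measureReal_def, hdisagree,
    probReal_compl_eq_one_sub (measurableSet_eq_fun hh hc), sub_sub_cancel]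

lemma measureReal_consistent_le_of_lt_trueErr (hc : Measurable c) (hh : Measurable h)
    {ε : ℝ} (herr : ε < trueErr μ c h) (m : ℕ) :
    (Measure.pi fun _ : Fin m => μ).real {s | ∀ i, h (s i) = c (s i)} ≤ (1 - ε) ^ m := by
  have herr_le_one : trueErr μ c h ≤ 1 := measureReal_le_one
  calc (Measure.pi fun _ : Fin m => μ).real {s | ∀ i, s i ∈ {x | h x = c x}}
      = (1 - trueErr μ c h) ^ m := by
        rw [measureReal_pi_forall_mem, Fintype.card_fin,
          measureReal_agree_eq_one_sub_trueErr μ hc hh]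
    _ ≤ (1 - ε) ^ m := pow_le_pow_left₀ (by linarith) (by linarith) m

lemma measureReal_consistent_and_lt_trueErr_le (hc : Measurable c) (hh : Measurable h)
    {ε : ℝ} (hε1 : ε ≤ 1) (m : ℕ) :
    (Measure.pi fun _ : Fin m => μ).real
        {s | (∀ i, h (s i) = c (s i)) ∧ ε < trueErr μ c h} ≤ (1 - ε) ^ m := by
  by_cases herr : ε < trueErr μ c h
  · simpa only [herr, and_true] using measureReal_consistent_le_of_lt_trueErr μ hc hh herr m
  · simp only [herr, and_false, Set.ofPred_false, measureReal_empty]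
    exact pow_nonneg (by linarith) m

end Consistency

lemma mul_one_sub_pow_le_mul_exp {n : ℝ} (hn : 0 ≤ n) {ε : ℝ} (hε1 : ε ≤ 1) (m : ℕ) :
    n * (1 - ε) ^ m ≤ n * Real.exp (-ε * m) := by
  refine mul_le_mul_of_nonneg_left ?_ hn
  calc (1 - ε) ^ m ≤ Real.exp (-ε) ^ m :=
        pow_le_pow_left₀ (by linarith) (Real.one_sub_le_exp_neg ε) m
    _ = Real.exp (-ε * m) := by rw [← Real.exp_nat_mul, mul_comm]

theorem haussler_union_bound_general {X : Type*} [MeasurableSpace X]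
    (μ : Measure X) [IsProbabilityMeasure μ]
    (c : X → Bool) (hc : Measurable c)
    (H : Finset (X → Bool)) (hmeas : ∀ h ∈ H, Measurable h)
    (ε : ℝ) (hε1 : ε ≤ 1) (m : ℕ) :
    ((Measure.pi fun _ : Fin m => μ)
        {s : Fin m → X | ∃ h ∈ H, (∀ i : Fin m, h (s i) = c (s i)) ∧ ε < trueErr μ c h}).toReal
      ≤ (H.card : ℝ) * (1 - ε) ^ m ∧
    (H.card : ℝ) * (1 - ε) ^ m ≤ (H.card : ℝ) * Real.exp (-ε * m) := by
  refine ⟨?_, mul_one_sub_pow_le_mul_exp H.card.cast_nonneg hε1 m⟩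
  have hunion : {s : Fin m → X | ∃ h ∈ H, (∀ i : Fin m, h (s i) = c (s i)) ∧ ε < trueErr μ c h}
      = ⋃ h ∈ H, {s | (∀ i, h (s i) = c (s i)) ∧ ε < trueErr μ c h} := by
    ext s; simp only [Set.mem_ofPred_eq, Set.mem_iUnion, exists_prop]
  rw [← measureReal_def, hunion]
  calc _ ≤ ∑ h ∈ H, (Measure.pi fun _ : Fin m => μ).real
          {s | (∀ i, h (s i) = c (s i)) ∧ ε < trueErr μ c h} :=
        measureReal_biUnion_finset_le H _
    _ ≤ ∑ _h ∈ H, (1 - ε) ^ m := Finset.sum_le_sum fun h hh =>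
        measureReal_consistent_and_lt_trueErr_le μ hc (hmeas h hh) hε1 m
    _ = H.card * (1 - ε) ^ m := by rw [Finset.sum_const, nsmul_eq_mul]

/-- Haussler's theorem for a finite hypothesis class (union bound form): the probability
that some hypothesis in `H` is consistent with the `m` i.i.d. samples yet has true error
exceeding `ε` is at most `|H| * (1 − ε)^m ≤ |H| * exp(−ε * m)`. -/
theorem haussler_union_bound {X : Type*} [MeasurableSpace X]
    (μ : Measure X) [IsProbabilityMeasure μ]
    (c : X → Bool) (hc : Measurable c)
    (H : Finset (X → Bool)) (hH : H.Nonempty) (hmeas : ∀ h ∈ H, Measurable h)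
    (ε : ℝ) (hε0 : 0 ≤ ε) (hε1 : ε ≤ 1) (m : ℕ) :
    ((Measure.pi fun _ : Fin m => μ)
        {s : Fin m → X | ∃ h ∈ H, (∀ i : Fin m, h (s i) = c (s i)) ∧ ε < trueErr μ c h}).toReal
      ≤ (H.card : ℝ) * (1 - ε) ^ m ∧
    (H.card : ℝ) * (1 - ε) ^ m ≤ (H.card : ℝ) * Real.exp (-ε * m) :=
  haussler_union_bound_general μ c hc H hmeas ε hε1 m
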